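/- arXiv:2406.02669 — 2 statements merged into one kernel-verified Lean document; each statement's English description precedes it below -/
import Mathlib

section
/- Fourier filtering of measurement outcomes for one mid-circuit measurement: let n, m ∈ ℕ, let p : Z2^n × Z2^n × V_m → ℝ with Pauli fidelities λ(x,y,Q) := Σ_{a,b,P} (-1)^{a·x + b·y + ⟨P,Q⟩} p(a,b,P), and let U_k(ρ) := Σ_{a,b ∈ Z2^n, P ∈ V_m} p(a,b,P) · (W(P) ⊗ E_{k+b,k+a}) ρ (W(P) ⊗ E_{k+b,k+a})† be the associated uniform stochastic instrument. Then for all x₀, y₀ ∈ Z2^n, Q₀ ∈ V_m, and every complex matrix ρ on the (m+n)-qubit space: Σ_{k ∈ Z2^n} (-1)^{k·(x₀+y₀)} · Tr((W(Q₀) ⊗ Z^{y₀}) · U_k(ρ)) = λ(x₀,y₀,Q₀) · Tr((W(Q₀) ⊗ Z^{x₀}) · ρ). -/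
open Finset Matrix Kronecker

/-- `m`-qubit Pauli operators modulo phase, as pairs of X- and Z-exponents per qubit. -/
abbrev V (m : ℕ) := Fin m → ZMod 2 × ZMod 2

/-- Symplectic inner product recording (non-)commutation of Pauli operators. -/
def sympl {m : ℕ} (P Q : V m) : ZMod 2 :=
  ∑ i, ((P i).1 * (Q i).2 + (P i).2 * (Q i).1)

/-- Dot product on `Z2^n`. -/
def dot {n : ℕ} (x y : Fin n → ZMod 2) : ZMod 2 := ∑ i, x i * y i

/-- The real sign `(-1)^z` associated with `z : ZMod 2`. -/
def sgn (z : ZMod 2) : ℝ := (-1 : ℝ) ^ z.val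

/-- The Hermitian Pauli matrix labeled by `v : V n`. -/
noncomputable def W {n : ℕ} (v : V n) :
    Matrix (Fin n → ZMod 2) (Fin n → ZMod 2) ℂ := fun j k =>
  Complex.I ^ (Finset.univ.filter (fun i => (v i).1 = 1 ∧ (v i).2 = 1)).card *
    (-1 : ℂ) ^ (∑ i, (v i).2 * k i : ZMod 2).val *
    (if j = (fun i => k i + (v i).1) then 1 else 0)

/-- `Z^x`: the purely-Z Pauli matrix with Z-exponents `x`. -/
noncomputable def Zpow {n : ℕ} (x : Fin n → ZMod 2) :
    Matrix (Fin n → ZMod 2) (Fin n → ZMod 2) ℂ :=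
  W (fun i => ((0 : ZMod 2), x i))

/-- Matrices on the `(m+n)`-qubit space. -/
abbrev MatP (m n : ℕ) :=
  Matrix ((Fin m → ZMod 2) × (Fin n → ZMod 2)) ((Fin m → ZMod 2) × (Fin n → ZMod 2)) ℂ

/-- The uniform stochastic instrument with Pauli error rates `p`:
`U_k(ρ) = Σ_{a,b,P} p(a,b,P) (W(P) ⊗ E_{k+b,k+a}) ρ (W(P) ⊗ E_{k+b,k+a})†`. -/
noncomputable def instU (n m : ℕ)
    (p : (Fin n → ZMod 2) × (Fin n → ZMod 2) × V m → ℝ)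
    (k : Fin n → ZMod 2) (ρ : MatP m n) : MatP m n :=
  ∑ a : Fin n → ZMod 2, ∑ b : Fin n → ZMod 2, ∑ P : V m,
    (p (a, b, P) : ℂ) •
      ((W P ⊗ₖ Matrix.single (k + b) (k + a) (1 : ℂ)) * ρ *
        (W P ⊗ₖ Matrix.single (k + b) (k + a) (1 : ℂ))ᴴ)
/-! Conjugation by `W(P) ⊗ E_{k+b,k+a}` turns `W(Q₀) ⊗ Z^{y₀}` into
`(-1)^{⟨P,Q₀⟩ + y₀·(k+b)} W(Q₀) ⊗ E_{k+a,k+a}`: Pauli operators commute up to the symplectic sign,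
and `Z^{y₀}` is diagonal, so the matrix units pick out its entry at `k + b`. In the sum over `k`
weighted by `(-1)^{k·(x₀+y₀)}` the two `k·y₀` signs cancel, and the substitution `v = k + a` leaves
`(-1)^{a·x₀ + b·y₀}` times `Σ_v (-1)^{x₀·v} Tr((W(Q₀) ⊗ E_{v,v}) ρ) = Tr((W(Q₀) ⊗ Z^{x₀}) ρ)`.
Averaging these signs against `p` is exactly `λ(x₀,y₀,Q₀)`. -/

noncomputable def signChar : AddChar (ZMod 2) ℂ where
  toFun z := (-1) ^ z.val
  map_zero_eq_one' := by simp
  map_add_eq_mul' u v := by rw [ZMod.val_add, ← pow_add, ← neg_one_pow_eq_pow_mod_two]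

lemma signChar_apply (z : ZMod 2) : signChar z = (-1) ^ z.val := rfl

lemma signChar_mul_self (z : ZMod 2) : signChar z * signChar z = 1 := by
  rw [← AddChar.map_add_eq_mul, CharTwo.add_self_eq_zero, AddChar.map_zero_eq_one]

lemma star_signChar (z : ZMod 2) : star (signChar z) = signChar z := by
  simp [signChar_apply]

lemma ofReal_sgn (z : ZMod 2) : (sgn z : ℂ) = signChar z := by
  simp [sgn, signChar_apply]

lemma sum_signChar_dotProduct_mul_add {ι : Type*} [Fintype ι] [DecidableEq ι]
    (t : (ι → ZMod 2) → ℂ) (x a : ι → ZMod 2) :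
    ∑ k, signChar (k ⬝ᵥ x) * t (k + a) = signChar (a ⬝ᵥ x) * ∑ v, signChar (x ⬝ᵥ v) * t v := by
  rw [Finset.mul_sum]
  refine Fintype.sum_equiv (Equiv.addRight a) _ _ fun k => ?_
  rw [Equiv.coe_addRight, dotProduct_comm x, add_dotProduct, AddChar.map_add_eq_mul]
  linear_combination -(signChar (k ⬝ᵥ x) * t (k + a)) * signChar_mul_self (a ⬝ᵥ x)

section Trace

variable {R ι κ : Type*} [CommSemiring R]

lemma trace_mul_sandwich [Fintype ι] (M X ρ Y : Matrix ι ι R) :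
    (M * (X * ρ * Y)).trace = (Y * M * X * ρ).trace := by
  rw [← Matrix.mul_assoc, trace_mul_comm, ← Matrix.mul_assoc, ← Matrix.mul_assoc]

variable [Fintype κ] [DecidableEq κ]

lemma kronecker_diagonal_eq_sum (A : Matrix ι ι R) (d : κ → R) :
    A ⊗ₖ diagonal d = ∑ v, d v • (A ⊗ₖ single v v 1) := by
  rw [← sum_single_eq_diagonal]
  simp_rw [← kronecker_smul, smul_single, smul_eq_mul, mul_one]
  exact map_sum (kroneckerBilinear (R := R) A) _ _

lemma trace_kronecker_diagonal_mul [Fintype ι] (A : Matrix ι ι R) (d : κ → R)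
    (ρ : Matrix (ι × κ) (ι × κ) R) :
    ((A ⊗ₖ diagonal d) * ρ).trace = ∑ v, d v * ((A ⊗ₖ single v v 1) * ρ).trace := by
  simp only [kronecker_diagonal_eq_sum, Matrix.sum_mul, trace_sum, Matrix.smul_mul, trace_smul,
    smul_eq_mul]

end Trace

section Pauli

variable {m n : ℕ}

namespace V

def xPart (v : V m) : Fin m → ZMod 2 := fun i => (v i).1

def zPart (v : V m) : Fin m → ZMod 2 := fun i => (v i).2

noncomputable def phase (v : V m) : ℂ :=
  Complex.I ^ (univ.filter fun i => (v i).1 = 1 ∧ (v i).2 = 1).card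

lemma star_phase_mul_self (v : V m) : star (phase v) * phase v = 1 := by
  simp [phase, ← mul_pow]

lemma sympl_eq (P Q : V m) : sympl P Q = xPart P ⬝ᵥ zPart Q + zPart P ⬝ᵥ xPart Q :=
  Finset.sum_add_distrib

end V

open V

lemma W_apply (v : V m) (j k : Fin m → ZMod 2) :
    W v j k = phase v * signChar (zPart v ⬝ᵥ k) * if j = k + xPart v then 1 else 0 := rfl

lemma W_conjTranspose_mul_mul_self (P Q : V m) :
    (W P)ᴴ * W Q * W P = signChar (sympl P Q) • W Q := by
  ext j k
  have hshift : k + xPart P + xPart Q = j + xPart P ↔ j = k + xPart Q := by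
    rw [add_right_comm, add_left_inj, eq_comm]
  simp only [mul_apply, conjTranspose_apply, W_apply, Matrix.smul_apply, smul_eq_mul, mul_ite,
    ite_mul, mul_one, mul_zero, zero_mul, apply_ite star, star_mul', star_zero, sum_ite_eq',
    mem_univ, if_true]
  rw [if_congr hshift rfl rfl]
  split_ifs with h
  · subst h
    rw [star_signChar, sympl_eq, dotProduct_comm (xPart P)]
    simp only [dotProduct_add, AddChar.map_add_eq_mul]
    linear_combination (phase Q * signChar (zPart Q ⬝ᵥ k) * signChar (zPart Q ⬝ᵥ xPart P) *
      signChar (zPart P ⬝ᵥ xPart Q)) *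
        (signChar (zPart P ⬝ᵥ k) ^ 2 * star_phase_mul_self P + signChar_mul_self (zPart P ⬝ᵥ k))
  · rfl

lemma Zpow_eq_diagonal (x : Fin n → ZMod 2) :
    Zpow x = diagonal fun v => signChar (x ⬝ᵥ v) := by
  have hx : xPart (fun i => ((0 : ZMod 2), x i)) = 0 := rfl
  have hz : zPart (fun i => ((0 : ZMod 2), x i)) = x := rfl
  ext j k
  by_cases h : j = k <;> simp [Zpow, W_apply, phase, hx, hz, h]

lemma kronecker_single_conj (P Q : V m) (u v : Fin n → ZMod 2) (d : (Fin n → ZMod 2) → ℂ) :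
    (W P ⊗ₖ single u v 1)ᴴ * (W Q ⊗ₖ diagonal d) * (W P ⊗ₖ single u v 1)
      = (signChar (sympl P Q) * d u) • (W Q ⊗ₖ single v v 1) := by
  rw [conjTranspose_kronecker, conjTranspose_single, ← mul_kronecker_mul, ← mul_kronecker_mul,
    W_conjTranspose_mul_mul_self, single_mul_mul_single, diagonal_apply_eq, star_one, one_mul,
    mul_one, smul_kronecker, ← smul_smul, ← kronecker_smul (d u), smul_single, smul_eq_mul, mul_one]

lemma trace_Zpow_mul_instrument_term (Q P : V m) (y u v : Fin n → ZMod 2) (ρ : MatP m n) :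
    ((W Q ⊗ₖ Zpow y) * ((W P ⊗ₖ single u v 1) * ρ * (W P ⊗ₖ single u v 1)ᴴ)).trace
      = signChar (sympl P Q) * signChar (y ⬝ᵥ u) * ((W Q ⊗ₖ single v v 1) * ρ).trace := by
  rw [trace_mul_sandwich, Zpow_eq_diagonal, kronecker_single_conj, Matrix.smul_mul, trace_smul,
    smul_eq_mul]

lemma sum_signChar_mul_trace_instrument_term (Q P : V m) (x y a b : Fin n → ZMod 2)
    (ρ : MatP m n) :
    ∑ k, signChar (k ⬝ᵥ (x + y)) *
        ((W Q ⊗ₖ Zpow y) *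
          ((W P ⊗ₖ single (k + b) (k + a) 1) * ρ * (W P ⊗ₖ single (k + b) (k + a) 1)ᴴ)).trace
      = signChar (a ⬝ᵥ x + b ⬝ᵥ y + sympl P Q) * ((W Q ⊗ₖ Zpow x) * ρ).trace := by
  have hsign : ∀ k, signChar (k ⬝ᵥ (x + y)) * signChar (y ⬝ᵥ (k + b))
      = signChar (b ⬝ᵥ y) * signChar (k ⬝ᵥ x) := fun k => by
    rw [dotProduct_add, dotProduct_add, dotProduct_comm y k, dotProduct_comm y b]
    simp only [AddChar.map_add_eq_mul]
    linear_combination signChar (b ⬝ᵥ y) * signChar (k ⬝ᵥ x) * signChar_mul_self (k ⬝ᵥ y)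
  calc _ = ∑ k, signChar (sympl P Q) * signChar (b ⬝ᵥ y) *
          (signChar (k ⬝ᵥ x) * ((W Q ⊗ₖ single (k + a) (k + a) 1) * ρ).trace) := by
        refine sum_congr rfl fun k _ => ?_
        rw [trace_Zpow_mul_instrument_term]
        linear_combination
          (signChar (sympl P Q) * ((W Q ⊗ₖ single (k + a) (k + a) 1) * ρ).trace) * hsign k
    _ = signChar (sympl P Q) * signChar (b ⬝ᵥ y) * signChar (a ⬝ᵥ x) *
          ∑ v, signChar (x ⬝ᵥ v) * ((W Q ⊗ₖ single v v 1) * ρ).trace := by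
        have hshift := sum_signChar_dotProduct_mul_add
          (fun v => ((W Q ⊗ₖ single v v 1) * ρ).trace) x a
        rw [← Finset.mul_sum, hshift]
        ring
    _ = _ := by
        rw [Zpow_eq_diagonal, trace_kronecker_diagonal_mul, AddChar.map_add_eq_mul,
          AddChar.map_add_eq_mul]
        ring

end Pauli

lemma dot_eq_dotProduct {n : ℕ} (x y : Fin n → ZMod 2) : dot x y = x ⬝ᵥ y := rfl

/-- Fourier filtering of measurement outcomes for one mid-circuit measurement:
`Σ_k (-1)^{k·(x₀+y₀)} Tr((W(Q₀) ⊗ Z^{y₀}) U_k(ρ)) = λ(x₀,y₀,Q₀) Tr((W(Q₀) ⊗ Z^{x₀}) ρ)`. -/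
theorem stmt_3 (n m : ℕ)
    (p : (Fin n → ZMod 2) × (Fin n → ZMod 2) × V m → ℝ)
    (lam : (Fin n → ZMod 2) → (Fin n → ZMod 2) → V m → ℝ)
    (hlam : ∀ (x y : Fin n → ZMod 2) (Q : V m),
      lam x y Q = ∑ a : Fin n → ZMod 2, ∑ b : Fin n → ZMod 2, ∑ P : V m,
        sgn (dot a x + dot b y + sympl P Q) * p (a, b, P))
    (x₀ y₀ : Fin n → ZMod 2) (Q₀ : V m) (ρ : MatP m n) :
    ∑ k : Fin n → ZMod 2,
      ((sgn (dot k (x₀ + y₀)) : ℂ) *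
        ((W Q₀ ⊗ₖ Zpow y₀) * instU n m p k ρ).trace)
    = (lam x₀ y₀ Q₀ : ℂ) * ((W Q₀ ⊗ₖ Zpow x₀) * ρ).trace := by
  rw [hlam]
  push_cast
  simp only [instU, ofReal_sgn, dot_eq_dotProduct, Matrix.mul_smul, trace_sum,
    trace_smul, smul_eq_mul, Finset.mul_sum, Finset.sum_mul]
  rw [Finset.sum_comm]
  refine sum_congr rfl fun a _ => ?_
  rw [Finset.sum_comm]
  refine sum_congr rfl fun b _ => ?_
  rw [Finset.sum_comm]
  refine sum_congr rfl fun P _ => ?_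
  simp_rw [mul_left_comm _ (p (a, b, P) : ℂ), ← Finset.mul_sum,
    sum_signChar_mul_trace_instrument_term]
  ring
end

section
/- Proposition 2 of the paper (syndrome measurements), stated as a cycle-space membership: let n, m ∈ ℕ and let s : Fin n → V_m be stabilizer labels with ⟨s_i, s_j⟩ = 0 for all i, j; write S(x) := Σ_{i : x_i = 1} s_i for x ∈ Z2^n. Let g : V_{m+n} → V_{m+n} be a map such that g(Q⊞x) = (Q + S(x))⊞x for every x ∈ Z2^n and every Q ∈ V_m with ⟨s_i, Q⟩ = 0 for all i. Let P ∈ V_m satisfy ⟨s_i, P⟩ = 0 for all i. Then in the free ℝ-module on Pauli weight patterns one has Σ_{x,y,k ∈ Z2^n} Σ_{Q ∈ V_m} (-1)^{⟨S(k) + P, Q⟩} · ([pt(Q⊞y)] − [pt(g(Q⊞x))]) = 0; i.e., the 1-chain Σ_{x,y,k,Q} (-1)^{⟨S(k)P, Q⟩} e^Q_{x,y} of the pattern transfer graph has zero boundary. -/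
open Finset

/-- Pauli weight pattern: `1` on qubits where the Pauli label is non-identity. -/
def pt {N : ℕ} (v : V N) : Fin N → ZMod 2 :=
  fun i => if v i = (0, 0) then 0 else 1

/-- `Q⊞x`: the `(m+n)`-qubit Pauli label of `Q ⊗ Z^x`. -/
def emb {m n : ℕ} (Q : V m) (x : Fin n → ZMod 2) : V (m + n) :=
  Fin.append Q (fun i => ((0 : ZMod 2), x i))

/-- `S(x) = Σ_{i : x_i = 1} s_i`: the label of the product of the stabilizers
selected by `x`. -/
def Sfun {n m : ℕ} (s : Fin n → V m) (x : Fin n → ZMod 2) : V m :=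
  ∑ i ∈ Finset.univ.filter (fun i => x i = 1), s i

/-!
Averaging over `k` projects onto the labels `Q` commuting with every stabilizer: for any other
`Q`, the map `k ↦ ⟨S(k), Q⟩` is a nonzero character of `Z2^n`, so its signs cancel. On the
commuting labels `g` acts as the translation `Q⊞x ↦ (Q + S(x))⊞x`, and the signs
`(-1)^{⟨S(k) + P, Q⟩}` are invariant under translation by `S(x)` because the stabilizers commute
with each other and with `P`. Hence, for each `x`, the head and tail parts of the chain at `x`
agree, and the double sum over `x, y` cancels by antisymmetry.
-/

lemma sgn_one : sgn 1 = -1 := by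
  simp [sgn, ZMod.val_one]

lemma sgn_add (a b : ZMod 2) : sgn (a + b) = sgn a * sgn b := by
  rw [sgn, sgn, sgn, ZMod.val_add, ← pow_add, ← neg_one_pow_eq_pow_mod_two]

theorem sum_sgn_eq_zero {A : Type*} [AddCommGroup A] [Fintype A] (φ : A →+ ZMod 2) {a₀ : A}
    (ha₀ : φ a₀ = 1) : ∑ a, sgn (φ a) = 0 := by
  have hshift : ∑ a, sgn (φ (a + a₀)) = -∑ a, sgn (φ a) := by
    simp [ha₀, sgn_add, sgn_one, Finset.sum_neg_distrib]
  have hinv : ∑ a, sgn (φ (a + a₀)) = ∑ a, sgn (φ a) :=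
    Fintype.sum_equiv (Equiv.addRight a₀) _ _ fun _ => rfl
  linarith

section Symplectic

variable {m : ℕ}

lemma sympl_comm (P Q : V m) : sympl P Q = sympl Q P :=
  Finset.sum_congr rfl fun _ _ => by ring

lemma sympl_add_left (P P' Q : V m) : sympl (P + P') Q = sympl P Q + sympl P' Q := by
  simp only [sympl, ← Finset.sum_add_distrib]
  exact Finset.sum_congr rfl fun _ _ => by
    simp only [Pi.add_apply, Prod.fst_add, Prod.snd_add]; ring

lemma sympl_add_right (P Q Q' : V m) : sympl P (Q + Q') = sympl P Q + sympl P Q' := by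
  rw [sympl_comm, sympl_add_left, sympl_comm Q, sympl_comm Q']

lemma sympl_sum_left {ι : Type*} (F : Finset ι) (f : ι → V m) (Q : V m) :
    sympl (∑ i ∈ F, f i) Q = ∑ i ∈ F, sympl (f i) Q :=
  map_sum (AddMonoidHom.mk' (sympl · Q) fun P P' => sympl_add_left P P' Q) f F

end Symplectic

section Stabilizers

variable {n m : ℕ} (s : Fin n → V m)

lemma sympl_Sfun_left (k : Fin n → ZMod 2) (Q : V m) :
    sympl (Sfun s k) Q = k ⬝ᵥ fun i => sympl (s i) Q := by
  rw [Sfun, sympl_sum_left, Finset.sum_filter, dotProduct]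
  refine Finset.sum_congr rfl fun i _ => ?_
  obtain h | h : k i = 0 ∨ k i = 1 := by generalize k i = a; revert a; decide
  all_goals simp [h]

lemma sympl_Sfun_left_eq_zero {Q : V m} (hQ : ∀ i, sympl (s i) Q = 0) (k : Fin n → ZMod 2) :
    sympl (Sfun s k) Q = 0 := by
  simp [sympl_Sfun_left, hQ]

def signSum (P Q : V m) : ℝ :=
  ∑ k : Fin n → ZMod 2, sgn (sympl (Sfun s k + P) Q)

lemma signSum_eq_zero {P Q : V m} {i₀ : Fin n} (hi₀ : sympl (s i₀) Q ≠ 0) :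
    signSum s P Q = 0 := by
  let φ : (Fin n → ZMod 2) →+ ZMod 2 :=
    AddMonoidHom.mk' (· ⬝ᵥ fun i => sympl (s i) Q) fun a b => add_dotProduct a b _
  have hφ : φ (Pi.single i₀ 1) = 1 := by
    have hne : ∀ a : ZMod 2, a ≠ 0 → a = 1 := by decide
    simpa [φ, single_dotProduct] using hne _ hi₀
  simp only [signSum, sympl_add_left, sgn_add, ← Finset.sum_mul, sympl_Sfun_left]
  exact mul_eq_zero_of_left (sum_sgn_eq_zero φ hφ) _

lemma signSum_add_Sfun (hs : ∀ i j, sympl (s i) (s j) = 0) {P : V m}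
    (hP : ∀ i, sympl (s i) P = 0) (Q : V m) (x : Fin n → ZMod 2) :
    signSum s P (Q + Sfun s x) = signSum s P Q := by
  have hcomm : ∀ k i, sympl (s i) (Sfun s k + P) = 0 := fun k i => by
    rw [sympl_add_right, sympl_comm, sympl_Sfun_left_eq_zero s (fun j => hs j i), hP, add_zero]
  refine Finset.sum_congr rfl fun k _ => ?_
  rw [sympl_add_right, sympl_comm _ (Sfun s x), sympl_Sfun_left_eq_zero s (hcomm k), add_zero]

end Stabilizers

lemma sum_sgn_smul_comp_g_emb {n m : ℕ} (s : Fin n → V m) (hs : ∀ i j, sympl (s i) (s j) = 0)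
    (g : V (m + n) → V (m + n))
    (hg : ∀ (x : Fin n → ZMod 2) (Q : V m), (∀ i, sympl (s i) Q = 0) →
      g (emb Q x) = emb (Q + Sfun s x) x)
    {P : V m} (hP : ∀ i, sympl (s i) P = 0) {M : Type*} [AddCommGroup M] [Module ℝ M]
    (F : V (m + n) → M) (x : Fin n → ZMod 2) :
    ∑ k : Fin n → ZMod 2, ∑ Q : V m, sgn (sympl (Sfun s k + P) Q) • F (g (emb Q x)) =
      ∑ k : Fin n → ZMod 2, ∑ Q : V m, sgn (sympl (Sfun s k + P) Q) • F (emb Q x) := by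
  have hfactor : ∀ G : V m → M, ∑ k : Fin n → ZMod 2, ∑ Q : V m,
      sgn (sympl (Sfun s k + P) Q) • G Q = ∑ Q, signSum s P Q • G Q := fun G => by
    rw [Finset.sum_comm]
    simp only [signSum, Finset.sum_smul]
  have hshift : ∀ Q, signSum s P Q • F (g (emb Q x)) =
      signSum s P Q • F (emb (Q + Sfun s x) x) := fun Q => by
    by_cases hQ : ∀ i, sympl (s i) Q = 0
    · rw [hg x Q hQ]
    · obtain ⟨i₀, hi₀⟩ := not_forall.mp hQ
      simp only [signSum_eq_zero s hi₀, zero_smul]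
  rw [hfactor, hfactor, Finset.sum_congr rfl fun Q _ => hshift Q]
  exact Fintype.sum_equiv (Equiv.addRight (Sfun s x)) _ _ fun Q => by
    rw [Equiv.coe_addRight, signSum_add_Sfun s hs hP]

/-- Proposition 2 of the paper (syndrome measurements), as a cycle-space membership:
for `P` commuting with all stabilizers, the 1-chain
`Σ_{x,y,k,Q} (-1)^{⟨S(k)P,Q⟩} e^Q_{x,y}` has zero boundary. -/
theorem stmt_7 (n m : ℕ) (s : Fin n → V m)
    (hs : ∀ i j, sympl (s i) (s j) = 0)
    (g : V (m + n) → V (m + n))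
    (hg : ∀ (x : Fin n → ZMod 2) (Q : V m), (∀ i, sympl (s i) Q = 0) →
      g (emb Q x) = emb (Q + Sfun s x) x)
    (P : V m) (hP : ∀ i, sympl (s i) P = 0) :
    ∑ x : Fin n → ZMod 2, ∑ y : Fin n → ZMod 2, ∑ k : Fin n → ZMod 2, ∑ Q : V m,
      sgn (sympl (Sfun s k + P) Q) •
        (Finsupp.single (pt (emb Q y)) (1 : ℝ) -
          Finsupp.single (pt (g (emb Q x))) (1 : ℝ)) = 0 := by
  have htail := sum_sgn_smul_comp_g_emb s hs g hg hP fun v => Finsupp.single (pt v) (1 : ℝ)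
  simp only [smul_sub, Finset.sum_sub_distrib, htail]
  rw [Finset.sum_comm, sub_self]
end
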